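/- Let Λ be a constant n×n complex matrix and let W : ℝ → Matrix (Fin n) (Fin n) ℂ satisfy W′(t) = A(t)·W(t) − W(t)·Λ for all t, with W(t) invertible for every t. If x : ℝ → ℂⁿ satisfies x′(t) = A(t)·x(t) for all t, then z(t) := W(t)⁻¹·x(t) satisfies z′(t) = Λ·z(t) for all t; equivalently z(t) = exp(t·Λ)·z(0) for all t. In particular the time-varying change of variables z = W⁻¹x transforms the linear time-periodic system ẋ = A(t)x into the linear time-invariant system ż = Λz. -/

import Mathlib

/-!
Differentiating `z = W⁻¹x` with `(W⁻¹)' = -W⁻¹W'W⁻¹` gives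
`z' = (ΛW⁻¹ - W⁻¹A)x + W⁻¹Ax = Λz`: the `A`-terms cancel. For such a `z`, the function
`exp(-tΛ)z(t)` has zero derivative because `Λ` commutes with its own exponential, so it is constant.
-/

open Matrix NormedSpace

theorem neg_nonsing_inv_mul_sub_mul_nonsing_inv {R m : Type*} [CommRing R] [Fintype m]
    [DecidableEq m] {W A Λ : Matrix m m R} (hW : IsUnit W) :
    -(W⁻¹ * (A * W - W * Λ) * W⁻¹) = Λ * W⁻¹ - W⁻¹ * A := by
  have hdet : IsUnit W.det := (isUnit_iff_isUnit_det W).mp hW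
  rw [mul_sub, sub_mul, nonsing_inv_mul_cancel_left _ _ hdet, mul_assoc,
    mul_assoc, mul_nonsing_inv _ hdet, mul_one, neg_sub]

theorem HasDerivAt.matrix_mulVec {𝕜 R m n : Type*} [NontriviallyNormedField 𝕜] [NormedRing R]
    [NormedAlgebra 𝕜 R] [Fintype n] {M : 𝕜 → Matrix m n R} {v : 𝕜 → n → R}
    {M' : Matrix m n R} {v' : n → R} {t : 𝕜}
    (hM : HasDerivAt M M' t) (hv : HasDerivAt v v' t) :
    HasDerivAt (fun s => M s *ᵥ v s) (M' *ᵥ v t + M t *ᵥ v') t := by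
  rw [hasDerivAt_pi] at hv ⊢
  intro i
  have hMi := hasDerivAt_pi.mp (hasDerivAt_pi.mp hM i)
  exact (HasDerivAt.fun_sum (u := Finset.univ) fun j _ => (hMi j).fun_mul (hv j)).congr_deriv
    Finset.sum_add_distrib

section MatrixCalculus

variable {𝕜 m : Type*} [RCLike 𝕜] [Fintype m] [DecidableEq m]

/- Matrices carry no global normed-ring structure. The ℓ∞-operator norm gives one inducing the
usual (entrywise) topology, and `HasDerivAt` only sees the topology, so the Banach-algebra
calculus can be borrowed inside the next two proofs. -/

theorem HasDerivAt.matrix_inv {W : ℝ → Matrix m m 𝕜} {W' : Matrix m m 𝕜} {t : ℝ}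
    (hW : HasDerivAt W W' t) (hu : IsUnit (W t)) :
    HasDerivAt (fun s => (W s)⁻¹) (-((W t)⁻¹ * W' * (W t)⁻¹)) t := by
  let normedRing : NormedRing (Matrix m m 𝕜) := Matrix.linftyOpNormedRing
  let _ : NormedAlgebra ℝ (Matrix m m 𝕜) := Matrix.linftyOpNormedAlgebra
  have : @CompleteSpace _ normedRing.toUniformSpace := FiniteDimensional.complete ℝ _
  simp only [nonsing_inv_eq_ringInverse]
  exact ((hasFDerivAt_ringInverse hu.unit).comp_hasDerivAt t hW).congr_deriv
    (by simp [nonsing_inv_eq_ringInverse])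

theorem hasDerivAt_matrix_exp_smul (Λ : Matrix m m 𝕜) (t : ℝ) :
    HasDerivAt (fun s : ℝ => exp (s • Λ)) (Λ * exp (t • Λ)) t := by
  let normedRing : NormedRing (Matrix m m 𝕜) := Matrix.linftyOpNormedRing
  let _ : NormedAlgebra ℝ (Matrix m m 𝕜) := Matrix.linftyOpNormedAlgebra
  have : @CompleteSpace _ normedRing.toUniformSpace := FiniteDimensional.complete ℝ _
  exact hasDerivAt_exp_smul_const' Λ t

theorem HasDerivAt.nonsing_inv_mulVec_of_intertwining {A : ℝ → Matrix m m 𝕜} {Λ : Matrix m m 𝕜}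
    {W : ℝ → Matrix m m 𝕜} {x : ℝ → m → 𝕜} {t : ℝ}
    (hW : HasDerivAt W (A t * W t - W t * Λ) t) (hu : IsUnit (W t))
    (hx : HasDerivAt x (A t *ᵥ x t) t) :
    HasDerivAt (fun s => (W s)⁻¹ *ᵥ x s) (Λ *ᵥ ((W t)⁻¹ *ᵥ x t)) t := by
  refine ((hW.matrix_inv hu).matrix_mulVec hx).congr_deriv ?_
  rw [neg_nonsing_inv_mul_sub_mul_nonsing_inv hu]
  simp only [sub_mulVec, mulVec_mulVec, sub_add_cancel]

theorem eq_exp_smul_mulVec_of_hasDerivAt {Λ : Matrix m m 𝕜} {z : ℝ → m → 𝕜}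
    (hz : ∀ t, HasDerivAt z (Λ *ᵥ z t) t) (t : ℝ) : z t = exp (t • Λ) *ᵥ z 0 := by
  set g : ℝ → m → 𝕜 := fun s => exp (s • -Λ) *ᵥ z s
  have hg : ∀ s, HasDerivAt g 0 s := fun s => by
    refine ((hasDerivAt_matrix_exp_smul (-Λ) s).matrix_mulVec (hz s)).congr_deriv ?_
    rw [mulVec_mulVec, ((Commute.refl Λ).neg_left.smul_left s).exp_left.eq, neg_mul,
      neg_mulVec, neg_add_cancel]
  have hconst : g t = g 0 :=
    is_const_of_deriv_eq_zero (fun s => (hg s).differentiableAt) (fun s => (hg s).deriv) t 0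
  have hexp : exp (t • Λ) * exp (t • -Λ) = 1 := by
    rw [smul_neg, ← Matrix.exp_add_of_commute _ _ (Commute.refl (t • Λ)).neg_right,
      add_neg_cancel, exp_zero]
  calc z t = exp (t • Λ) *ᵥ g t := by rw [mulVec_mulVec, hexp, one_mulVec]
    _ = exp (t • Λ) *ᵥ z 0 := by simp only [hconst, g, zero_smul, exp_zero, one_mulVec]

end MatrixCalculus

theorem floquet_change_of_variables_general
    (n : ℕ)
    (A : ℝ → Matrix (Fin n) (Fin n) ℂ)
    (Λ : Matrix (Fin n) (Fin n) ℂ)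
    (W : ℝ → Matrix (Fin n) (Fin n) ℂ)
    (hW : ∀ t : ℝ, HasDerivAt W (A t * W t - W t * Λ) t)
    (hWunit : ∀ t : ℝ, IsUnit (W t))
    (x z : ℝ → Fin n → ℂ)
    (hx : ∀ t : ℝ, HasDerivAt x ((A t).mulVec (x t)) t)
    (hz : ∀ t : ℝ, z t = (W t)⁻¹.mulVec (x t)) :
    (∀ t : ℝ, HasDerivAt z (Λ.mulVec (z t)) t)
    ∧ ∀ t : ℝ, z t = (NormedSpace.exp ((t : ℂ) • Λ)).mulVec (z 0) := by
  have hderiv : ∀ t, HasDerivAt z (Λ *ᵥ z t) t := fun t => by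
    rw [funext hz]
    exact (hW t).nonsing_inv_mulVec_of_intertwining (hWunit t) (hx t)
  refine ⟨hderiv, fun t => ?_⟩
  simpa only [Complex.coe_smul] using eq_exp_smul_mulVec_of_hasDerivAt hderiv t

/-- The time-varying change of variables `z = W(t)⁻¹x` transforms the linear time-periodic system
`ẋ = A(t)x` into the linear time-invariant system `ż = Λz`, whose solutions are
`z(t) = exp(tΛ)z(0)`. -/
theorem floquet_change_of_variables
    (T : ℝ) (hT : 0 < T) (n : ℕ) (hn : 1 ≤ n)
    (A : ℝ → Matrix (Fin n) (Fin n) ℂ)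
    (hA : Continuous A) (hAper : ∀ t : ℝ, A (t + T) = A t)
    (Λ : Matrix (Fin n) (Fin n) ℂ)
    (W : ℝ → Matrix (Fin n) (Fin n) ℂ)
    (hW : ∀ t : ℝ, HasDerivAt W (A t * W t - W t * Λ) t)
    (hWunit : ∀ t : ℝ, IsUnit (W t))
    (x z : ℝ → Fin n → ℂ)
    (hx : ∀ t : ℝ, HasDerivAt x ((A t).mulVec (x t)) t)
    (hz : ∀ t : ℝ, z t = (W t)⁻¹.mulVec (x t)) :
    (∀ t : ℝ, HasDerivAt z (Λ.mulVec (z t)) t)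
    ∧ ∀ t : ℝ, z t = (NormedSpace.exp ((t : ℂ) • Λ)).mulVec (z 0) :=
  floquet_change_of_variables_general n A Λ W hW hWunit x z hx hz
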